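/- Let (A_b, f_b) be the one-dimensional double extension of a quadratic Lie algebra (A, f) by an f-skew-symmetric derivation d. Then Z(A_b) = (Z(A) ∩ ker d) ⊕ Kβ if and only if d is not an inner derivation of A; otherwise d = ad(x) for some x ∈ A and Z(A_b) = (Z(A) ∩ ker d) ⊕ Kβ ⊕ K(b − x). -/
import Mathlib


open Module

variable {K A : Type*}

/-- The bracket of the one-dimensional double extension `A_b = Kb ⊕ A ⊕ Kβ` of `(A,f)`
by an `f`-skew-symmetric derivation `d`:
`[b₁b + a₁ + β₁β, b₂b + a₂ + β₂β] = b₁d(a₂) − b₂d(a₁) + [a₁,a₂] + f(d(a₁),a₂)β`. -/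
def odeBr [Field K] [LieRing A] [LieAlgebra K A]
    (f : A →ₗ[K] A →ₗ[K] K) (d : A →ₗ[K] A)
    (X Y : K × A × K) : K × A × K :=
  (0, X.1 • d Y.2.1 - Y.1 • d X.2.1 + ⁅X.2.1, Y.2.1⁆, f (d X.2.1) Y.2.1)

lemma centre_char [Field K] [LieRing A] [LieAlgebra K A]
    (f : A →ₗ[K] A →ₗ[K] K)
    (hnd : ∀ x, (∀ y, f x y = 0) → x = 0)
    (d : A →ₗ[K] A) (X : K × A × K) :
    (∀ Y, odeBr f d X Y = 0) ↔ d X.2.1 = 0 ∧ ∀ y, X.1 • d y + ⁅X.2.1, y⁆ = 0 := by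
  constructor
  · intro h
    have h1 : d X.2.1 = 0 := by
      apply hnd; intro y
      have := congrArg (fun p : K × A × K => p.2.2) (h (0, y, 0))
      simpa [odeBr] using this
    refine ⟨h1, fun y => ?_⟩
    have := congrArg (fun p : K × A × K => p.2.1) (h (0, y, 0))
    simpa [odeBr, h1] using this
  · rintro ⟨h1, h2⟩ Y
    have := h2 Y.2.1
    simp [odeBr, h1, Prod.ext_iff, this]

/-- Description of the centre of the one-dimensional double extension `(A_b, f_b)`:
`Z(A_b) = (Z(A) ∩ ker d) ⊕ Kβ` if and only if `d` is not inner; otherwise `d = ad x`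
for some `x` and `Z(A_b) = (Z(A) ∩ ker d) ⊕ Kβ ⊕ K(b − x)`. -/
theorem stmt2 [Field K] [CharZero K] [LieRing A] [LieAlgebra K A] [FiniteDimensional K A]
    (f : A →ₗ[K] A →ₗ[K] K)
    (hsymm : ∀ x y, f x y = f y x)
    (hnd : ∀ x, (∀ y, f x y = 0) → x = 0)
    (hinv : ∀ x y z, f ⁅x, y⁆ z = f x ⁅y, z⁆)
    (d : A →ₗ[K] A)
    (hder : ∀ x y : A, d ⁅x, y⁆ = ⁅d x, y⁆ + ⁅x, d y⁆)
    (hdskew : ∀ x y : A, f (d x) y + f x (d y) = 0) :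
    (({X : K × A × K | ∀ Y, odeBr f d X Y = 0} =
        {X : K × A × K | X.1 = 0 ∧ (∀ y : A, ⁅X.2.1, y⁆ = 0) ∧ d X.2.1 = 0})
      ↔ ¬ ∃ x : A, ∀ a : A, d a = ⁅x, a⁆) ∧
    (∀ x : A, (∀ a : A, d a = ⁅x, a⁆) →
      {X : K × A × K | ∀ Y, odeBr f d X Y = 0} =
        {X : K × A × K | (∀ y : A, ⁅X.2.1 + X.1 • x, y⁆ = 0) ∧ d (X.2.1 + X.1 • x) = 0}) := by
  constructor
  · constructor
    · -- sets equal → not inner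
      intro hset ⟨x, hx⟩
      have hX : (∀ Y, odeBr f d ((1 : K), -x, (0 : K)) Y = 0) := by
        rw [centre_char f hnd]
        constructor
        · simp [hx]
        · intro y
          rw [hx, neg_lie]
          module
      have hmem := (Set.ext_iff.mp hset ((1 : K), -x, (0 : K))).mp hX
      exact one_ne_zero hmem.1
    · -- not inner → sets equal
      intro hni
      ext X
      rw [Set.mem_setOf_eq, Set.mem_setOf_eq, centre_char f hnd]
      constructor
      · rintro ⟨h1, h2⟩
        have ht : X.1 = 0 := by
          by_contra ht
          exact hni ⟨(-X.1⁻¹) • X.2.1, fun a => by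
            have h := h2 a
            have h' : X.1 • d a = -⁅X.2.1, a⁆ := by
              linear_combination (norm := module) h
            have h'' := congrArg (fun z => X.1⁻¹ • z) h'
            simp only [smul_smul, inv_mul_cancel₀ ht, one_smul, smul_neg] at h''
            rw [smul_lie, h'']
            module⟩
        refine ⟨ht, fun y => ?_, h1⟩
        have := h2 y
        simpa [ht] using this
      · rintro ⟨ht, hc, h1⟩
        exact ⟨h1, fun y => by simp [ht, hc]⟩
  · -- inner case
    intro x hx
    ext X
    rw [Set.mem_setOf_eq, Set.mem_setOf_eq, centre_char f hnd]
    have hdx : d x = 0 := by simp [hx]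
    have key : ∀ y, ⁅X.2.1 + X.1 • x, y⁆ = X.1 • d y + ⁅X.2.1, y⁆ := by
      intro y
      rw [add_lie, smul_lie, hx y, add_comm]
    constructor
    · rintro ⟨h1, h2⟩
      refine ⟨fun y => by rw [key y, h2], ?_⟩
      simp [map_add, h1, hdx]
    · rintro ⟨hc, hd⟩
      refine ⟨?_, fun y => by rw [← key y, hc]⟩
      have : d X.2.1 + X.1 • d x = 0 := by simpa [map_add] using hd
      simpa [hdx] using this
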